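/- arXiv:math/0607189 — 13 statements merged into one kernel-verified Lean document; each statement's English description precedes it below -/
import Mathlib

section
/- Let μ satisfy (μ⊆) and (μPR). Then the conditions (μCum α) and (μCumt α) are downward monotone in α: for every ordinal α, if (μCum α) holds then (μCum β) holds for every ordinal β ≤ α, and if (μCumt α) holds then (μCumt β) holds for every ordinal β ≤ α. -/
universe u v

/-- (μCum α): for every `U ∈ 𝒴` and every family `(X_β)_{β ≤ α}` in `𝒴`, if
`μ(X_β) ⊆ U ∪ ⋃{X_γ : γ < β}` for all `β ≤ α`, then
`⋂{X_γ : γ ≤ α} ∩ μ(U) ⊆ μ(X_α)`. -/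
def muCumOrd {Z : Type u} (𝒴 : Set (Set Z)) (μ : Set Z → Set Z) (α : Ordinal.{v}) : Prop :=
  ∀ U ∈ 𝒴, ∀ X : Ordinal.{v} → Set Z,
    (∀ β ≤ α, X β ∈ 𝒴) →
    (∀ β ≤ α, μ (X β) ⊆ U ∪ ⋃ γ ∈ Set.Iio β, X γ) →
    (⋂ γ ∈ Set.Iic α, X γ) ∩ μ U ⊆ μ (X α)

/-- (μCumt α): same prerequisite, with conclusion `X_α ∩ μ(U) ⊆ μ(X_α)`. -/
def muCumtOrd {Z : Type u} (𝒴 : Set (Set Z)) (μ : Set Z → Set Z) (α : Ordinal.{v}) : Prop :=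
  ∀ U ∈ 𝒴, ∀ X : Ordinal.{v} → Set Z,
    (∀ β ≤ α, X β ∈ 𝒴) →
    (∀ β ≤ α, μ (X β) ⊆ U ∪ ⋃ γ ∈ Set.Iio β, X γ) →
    X α ∩ μ U ⊆ μ (X α)

/-- If μ satisfies (μ⊆) and (μPR), then (μCum α) and (μCumt α) are downward
monotone in the ordinal α. -/
theorem muCum_muCumt_downward {Z : Type u} (𝒴 : Set (Set Z)) (μ : Set Z → Set Z)
    (hsub : ∀ X ∈ 𝒴, μ X ⊆ X)
    (hPR : ∀ X ∈ 𝒴, ∀ Y ∈ 𝒴, X ⊆ Y → μ Y ∩ X ⊆ μ X) :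
    ∀ α : Ordinal.{v},
      (muCumOrd 𝒴 μ α → ∀ β ≤ α, muCumOrd 𝒴 μ β) ∧
      (muCumtOrd 𝒴 μ α → ∀ β ≤ α, muCumtOrd 𝒴 μ β) := by
  intro α
  constructor
  · intro hC β hβ U hU X hX hmu
    set Y : Ordinal.{v} → Set Z := fun γ => if γ ≤ β then X γ else X β with hY
    have hYmem : ∀ γ ≤ α, Y γ ∈ 𝒴 := by
      intro γ _
      by_cases h : γ ≤ β <;> simp [hY, h] <;> [exact hX γ h; exact hX β le_rfl]
    have hYmu : ∀ γ ≤ α, μ (Y γ) ⊆ U ∪ ⋃ δ ∈ Set.Iio γ, Y δ := by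
      intro γ _
      by_cases h : γ ≤ β
      · simp only [hY, if_pos h]
        refine (hmu γ h).trans (Set.union_subset_union_right U ?_)
        refine Set.iUnion₂_subset fun δ hδ => ?_
        have : δ ≤ β := le_of_lt (lt_of_lt_of_le hδ h)
        exact Set.subset_iUnion₂_of_subset δ hδ (by simp [hY, this])
      · push_neg at h
        simp only [hY, if_neg (not_le.mpr h)]
        refine (hmu β le_rfl).trans (Set.union_subset_union_right U ?_)
        refine Set.iUnion₂_subset fun δ hδ => ?_
        have hδβ : δ ≤ β := le_of_lt hδ
        exact Set.subset_iUnion₂_of_subset δ (lt_trans hδ h) (by simp [hY, hδβ])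
    have hconc := hC U hU Y hYmem hYmu
    have hYα : Y α = X β := by
      by_cases h : α ≤ β
      · have : α = β := le_antisymm h hβ
        simp [hY, h, this]
      · simp [hY, h]
    intro z hz
    rw [Set.mem_inter_iff, Set.mem_iInter₂] at hz
    have : z ∈ μ (Y α) := by
      apply hconc
      refine ⟨Set.mem_iInter₂.mpr fun γ _ => ?_, hz.2⟩
      by_cases h : γ ≤ β <;> simp [hY, h] <;> [exact hz.1 γ (Set.mem_Iic.mpr h); exact hz.1 β Set.self_mem_Iic]
    rwa [hYα] at this
  · intro hC β hβ U hU X hX hmu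
    set Y : Ordinal.{v} → Set Z := fun γ => if γ ≤ β then X γ else X β with hY
    have hYmem : ∀ γ ≤ α, Y γ ∈ 𝒴 := by
      intro γ _
      by_cases h : γ ≤ β <;> simp [hY, h] <;> [exact hX γ h; exact hX β le_rfl]
    have hYmu : ∀ γ ≤ α, μ (Y γ) ⊆ U ∪ ⋃ δ ∈ Set.Iio γ, Y δ := by
      intro γ _
      by_cases h : γ ≤ β
      · simp only [hY, if_pos h]
        refine (hmu γ h).trans (Set.union_subset_union_right U ?_)
        refine Set.iUnion₂_subset fun δ hδ => ?_
        have : δ ≤ β := le_of_lt (lt_of_lt_of_le hδ h)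
        exact Set.subset_iUnion₂_of_subset δ hδ (by simp [hY, this])
      · push_neg at h
        simp only [hY, if_neg (not_le.mpr h)]
        refine (hmu β le_rfl).trans (Set.union_subset_union_right U ?_)
        refine Set.iUnion₂_subset fun δ hδ => ?_
        have hδβ : δ ≤ β := le_of_lt hδ
        exact Set.subset_iUnion₂_of_subset δ (lt_trans hδ h) (by simp [hY, hδβ])
    have hconc := hC U hU Y hYmem hYmu
    have hYα : Y α = X β := by
      by_cases h : α ≤ β
      · have : α = β := le_antisymm h hβ
        simp [hY, h, this]
      · simp [hY, h]
    rw [hYα] at hconc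
    exact hconc
end

section
/- Let 𝒵 = ⟨𝒰, ≺⟩ be a 𝒴-smooth preferential structure over Z and define μ(X) := μ_𝒵(X) for X ∈ 𝒴. Then (μCum α) holds for every ordinal α. -/
universe u v

/-- A preferential structure over `Z` (version with copies): a set of pairs
`⟨x, i⟩` with `x ∈ Z` and `i` an index, and a binary relation on them. -/
structure PrefStruct (Z : Type u) : Type (u + 1) where
  I : Type u
  elems : Set (Z × I)
  prec : Z × I → Z × I → Prop

/-- `μ_𝒵(X)`: the set of minimal elements of `X` in the structure `P`. -/
def muZ {Z : Type u} (P : PrefStruct Z) (X : Set Z) : Set Z :=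
  {x | x ∈ X ∧ ∃ i : P.I, (x, i) ∈ P.elems ∧
    ∀ p ∈ P.elems, p.1 ∈ X → ¬ P.prec p (x, i)}

/-- `𝒴`-smoothness of a preferential structure. -/
def IsSmoothPref {Z : Type u} (𝒴 : Set (Set Z)) (P : PrefStruct Z) : Prop :=
  ∀ X ∈ 𝒴, ∀ c ∈ P.elems, c.1 ∈ X →
    ((∀ p ∈ P.elems, p.1 ∈ X → ¬ P.prec p c) ∨
     (∃ p ∈ P.elems, P.prec p c ∧ p.1 ∈ X ∧
        ∀ q ∈ P.elems, q.1 ∈ X → ¬ P.prec q p))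

/-- All (μCum α) hold in 𝒴-smooth preferential structures. -/
theorem smooth_muCumOrd {Z : Type u} (𝒴 : Set (Set Z)) (P : PrefStruct Z)
    (μ : Set Z → Set Z) (hμ : ∀ X ∈ 𝒴, μ X = muZ P X)
    (hsm : IsSmoothPref 𝒴 P) :
    ∀ α : Ordinal.{v}, muCumOrd 𝒴 μ α := by
  intro α U hU X hX hcum x hx
  obtain ⟨hxi, hxmu⟩ := hx
  rw [hμ U hU] at hxmu
  obtain ⟨hxU, i, hi, hmin⟩ := hxmu
  have hxX : ∀ β ≤ α, x ∈ X β := by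
    intro β hβ
    exact Set.mem_iInter₂.mp hxi β hβ
  have key : ∀ β, β ≤ α → ∀ p ∈ P.elems, p.1 ∈ X β → ¬ P.prec p (x, i) := by
    intro β
    induction β using Ordinal.induction with
    | h β ih =>
      intro hβ
      by_contra hcon
      push_neg at hcon
      obtain ⟨p, hp, hpX, hpprec⟩ := hcon
      rcases hsm (X β) (hX β hβ) (x, i) hi (hxX β hβ) with h1 | h2
      · exact h1 p hp hpX hpprec
      · obtain ⟨q, hq, hqprec, hqX, hqmin⟩ := h2
        have hzmu : q.1 ∈ μ (X β) := by
          rw [hμ (X β) (hX β hβ)]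
          exact ⟨hqX, q.2, by simpa using hq, by simpa using hqmin⟩
        rcases hcum β hβ hzmu with hzU | hzX
        · exact hmin q hq hzU hqprec
        · simp only [Set.mem_iUnion, Set.mem_Iio] at hzX
          obtain ⟨γ, hγ, hz⟩ := hzX
          exact ih γ hγ (le_trans hγ.le hβ) q hq hz hqprec
  rw [hμ (X α) (hX α le_rfl)]
  exact ⟨hxX α le_rfl, i, hi, key α le_rfl⟩
end

section
/- Let 𝒵 = ⟨𝒰, ≺⟩ be a 𝒴-smooth preferential structure over Z whose relation ≺ is transitive, and define μ(X) := μ_𝒵(X) for X ∈ 𝒴. Then (μCumt α) holds for every ordinal α. -/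
universe u v

/-- All (μCumt α) hold in transitive 𝒴-smooth preferential structures. -/
theorem smooth_trans_muCumtOrd {Z : Type u} (𝒴 : Set (Set Z)) (P : PrefStruct Z)
    (μ : Set Z → Set Z) (hμ : ∀ X ∈ 𝒴, μ X = muZ P X)
    (htrans : Transitive P.prec)
    (hsm : IsSmoothPref 𝒴 P) :
    ∀ α : Ordinal.{v}, muCumtOrd 𝒴 μ α := by
  intro α U hU X hX hsub x hx
  obtain ⟨hxXα, hxmU⟩ := hx
  rw [hμ U hU] at hxmU
  obtain ⟨hxU, i, hi, hmin⟩ := hxmU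
  have key : ∀ β : Ordinal.{v}, β ≤ α → ∀ p ∈ P.elems, p.1 ∈ X β → ¬ P.prec p (x, i) := by
    intro β
    induction β using Ordinal.induction with
    | _ β ih =>
      intro hβ p hp hpX hpprec
      have contra : ∀ r ∈ P.elems, P.prec r (x, i) → r.1 ∈ X β →
          (∀ q ∈ P.elems, q.1 ∈ X β → ¬ P.prec q r) → False := by
        intro r hr hrprec hrX hrmin
        have hrmu : r.1 ∈ μ (X β) := by
          rw [hμ (X β) (hX β hβ)]
          exact ⟨hrX, r.2, by simpa using hr, hrmin⟩
        rcases hsub β hβ hrmu with hrU | hrUn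
        · exact hmin r hr hrU hrprec
        · simp only [Set.mem_iUnion, Set.mem_Iio] at hrUn
          obtain ⟨γ, hγβ, hrγ⟩ := hrUn
          exact ih γ hγβ (le_of_lt (lt_of_lt_of_le hγβ hβ)) r hr hrγ hrprec
      rcases hsm (X β) (hX β hβ) p hp hpX with hminp | ⟨q, hq, hqp, hqX, hqmin⟩
      · exact contra p hp hpprec hpX hminp
      · exact contra q hq (htrans hqp hpprec) hqX hqmin
  rw [hμ (X α) (hX α le_rfl)]
  exact ⟨hxXα, i, hi, key α le_rfl⟩
end

section
/- Suppose 𝒴 is closed under finite unions and μ satisfies (μ⊆), (μPR) and (μCum). Then (μCumt α) holds for every ordinal α, and consequently (μCum α) holds for every ordinal α. -/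
universe u v

/-- If 𝒴 is closed under finite unions and μ satisfies (μ⊆), (μPR) and (μCum),
then all (μCumt α), and consequently all (μCum α), hold. -/
theorem muCum_union_all_ordinals {Z : Type u} (𝒴 : Set (Set Z)) (μ : Set Z → Set Z)
    (hunion : ∀ A ∈ 𝒴, ∀ B ∈ 𝒴, A ∪ B ∈ 𝒴)
    (hsub : ∀ X ∈ 𝒴, μ X ⊆ X)
    (hPR : ∀ X ∈ 𝒴, ∀ Y ∈ 𝒴, X ⊆ Y → μ Y ∩ X ⊆ μ X)
    (hCum : ∀ X ∈ 𝒴, ∀ Y ∈ 𝒴, μ X ⊆ Y → Y ⊆ X → μ X = μ Y) :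
    (∀ α : Ordinal.{v}, muCumtOrd 𝒴 μ α) ∧ (∀ α : Ordinal.{v}, muCumOrd 𝒴 μ α) := by
  have ht : ∀ α : Ordinal.{v}, muCumtOrd 𝒴 μ α := by
    intro α U hU X hX hμ
    have key : ∀ β : Ordinal.{v}, β ≤ α → μ (U ∪ X β) = μ U := by
      intro β
      induction β using Ordinal.induction with
      | h β IH =>
        intro hβ
        have hXβ : X β ∈ 𝒴 := hX β hβ
        have hW : U ∪ X β ∈ 𝒴 := hunion U hU _ hXβ
        have hsubU : μ (U ∪ X β) ⊆ U := by
          intro z hz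
          by_contra hzU
          have hzX : z ∈ X β := (hsub _ hW hz).resolve_left hzU
          have hzμX : z ∈ μ (X β) :=
            hPR _ hXβ _ hW Set.subset_union_right ⟨hz, hzX⟩
          rcases hμ β hβ hzμX with h | h
          · exact hzU h
          · simp only [Set.mem_iUnion, Set.mem_Iio] at h
            obtain ⟨γ, hγ, hzγ⟩ := h
            have hXγ : X γ ∈ 𝒴 := hX γ (le_of_lt (lt_of_lt_of_le hγ hβ))
            have hA : μ (U ∪ X γ) = μ U := IH γ hγ (le_of_lt (lt_of_lt_of_le hγ hβ))
            have hAY : U ∪ X γ ∈ 𝒴 := hunion U hU _ hXγ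
            have hCY : (U ∪ X γ) ∪ (U ∪ X β) ∈ 𝒴 := hunion _ hAY _ hW
            have hC1 : μ ((U ∪ X γ) ∪ (U ∪ X β)) ⊆ U ∪ X β := by
              intro w hw
              rcases hsub _ hCY hw with hwA | hwW
              · have hwμA : w ∈ μ (U ∪ X γ) :=
                  hPR _ hAY _ hCY Set.subset_union_left ⟨hw, hwA⟩
                rw [hA] at hwμA
                exact Or.inl (hsub U hU hwμA)
              · exact hwW
            have hCeq : μ ((U ∪ X γ) ∪ (U ∪ X β)) = μ (U ∪ X β) :=
              hCum _ hCY _ hW hC1 Set.subset_union_right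
            have hzC : z ∈ μ ((U ∪ X γ) ∪ (U ∪ X β)) := hCeq ▸ hz
            have hzA : z ∈ μ (U ∪ X γ) :=
              hPR _ hAY _ hCY Set.subset_union_left ⟨hzC, Or.inr hzγ⟩
            rw [hA] at hzA
            exact hzU (hsub U hU hzA)
        exact hCum _ hW U hU hsubU Set.subset_union_left
    intro z hz
    have h1 : z ∈ μ (U ∪ X α) := (key α le_rfl) ▸ hz.2
    exact hPR _ (hX α le_rfl) _ (hunion U hU _ (hX α le_rfl))
      Set.subset_union_right ⟨h1, hz.1⟩
  refine ⟨ht, ?_⟩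
  intro α U hU X hX hμ z hz
  have hzXα : z ∈ X α := Set.mem_iInter₂.1 hz.1 α (Set.mem_Iic.2 le_rfl)
  exact ht α U hU X hX hμ ⟨hzXα, hz.2⟩
end

section
/- If μ satisfies (μ⊆) and (HU), then μ satisfies (μPR) and (μCum). -/
universe u

/-- `H(U)`: the eventual (stabilized) value of the increasing ordinal-indexed
sequence `H(U)_0 = U`, `H(U)_{α+1} = H(U)_α ∪ ⋃{X ∈ 𝒴 : μ(X) ⊆ H(U)_α}`, unions
at limits; equivalently, the least set `S ⊇ U` such that every `X ∈ 𝒴` with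
`μ(X) ⊆ S` is contained in `S`. -/
def HsetU {Z : Type u} (𝒴 : Set (Set Z)) (μ : Set Z → Set Z) (U : Set Z) : Set Z :=
  ⋂₀ {S : Set Z | U ⊆ S ∧ ∀ X ∈ 𝒴, μ X ⊆ S → X ⊆ S}

/-- (HU): if `x ∈ μ(U)` and `x ∈ Y − μ(Y)`, then `μ(Y) ⊈ H(U)`. -/
def HUCond {Z : Type u} (𝒴 : Set (Set Z)) (μ : Set Z → Set Z) : Prop :=
  ∀ U ∈ 𝒴, ∀ Y ∈ 𝒴, ∀ x : Z, x ∈ μ U → x ∈ Y → x ∉ μ Y → ¬ μ Y ⊆ HsetU 𝒴 μ U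

/-- If μ satisfies (μ⊆) and (HU), then μ satisfies (μPR) and (μCum). -/
theorem HU_implies_muPR_muCum {Z : Type u} (𝒴 : Set (Set Z)) (μ : Set Z → Set Z)
    (hsub : ∀ X ∈ 𝒴, μ X ⊆ X)
    (hHU : HUCond 𝒴 μ) :
    (∀ X ∈ 𝒴, ∀ Y ∈ 𝒴, X ⊆ Y → μ Y ∩ X ⊆ μ X) ∧
    (∀ X ∈ 𝒴, ∀ Y ∈ 𝒴, μ X ⊆ Y → Y ⊆ X → μ X = μ Y) := by
  have hUH : ∀ U : Set Z, U ⊆ HsetU 𝒴 μ U := by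
    intro U z hz S hS
    exact hS.1 hz
  constructor
  · intro X hX Y hY hXY x hx
    by_contra hnot
    exact hHU Y hY X hX x hx.1 hx.2 hnot
      ((hsub X hX).trans (hXY.trans (hUH Y)))
  · intro X hX Y hY hmu hYX
    apply Set.Subset.antisymm
    · intro x hx
      by_contra hnot
      exact hHU X hX Y hY x hx (hmu hx) hnot
        ((hsub Y hY).trans (hYX.trans (hUH X)))
    · intro x hx
      by_contra hnot
      exact hHU Y hY X hX x hx (hYX (hsub Y hY hx)) hnot
        (hmu.trans (hUH Y))
end

section
/- Suppose 𝒴 is closed under finite unions and μ satisfies (μ⊆), (μPR) and (μCum). Then for all U, A, Y ∈ 𝒴 and all x: (1) H(U) = H(U)_1, i.e. H(U) = U ∪ ⋃{X ∈ 𝒴 : μ(X) ⊆ U}; (2) if U ⊆ A and μ(A) ⊆ H(U), then μ(A) ⊆ U; (3) if μ(Y) ⊆ H(U), then Y ⊆ H(U) and μ(U ∪ Y) = μ(U); (4) if x ∈ μ(U) and x ∈ Y − μ(Y), then Y ⊈ H(U); in particular (HU) holds. -/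
universe u

/-- If 𝒴 is closed under finite unions and μ satisfies (μ⊆), (μPR), (μCum), then:
(1) `H(U)` is already obtained in one step, `H(U) = U ∪ ⋃{X ∈ 𝒴 : μ(X) ⊆ U}`;
(2) `U ⊆ A`, `μ(A) ⊆ H(U)` imply `μ(A) ⊆ U`;
(3) `μ(Y) ⊆ H(U)` implies `Y ⊆ H(U)` and `μ(U ∪ Y) = μ(U)`;
(4) `x ∈ μ(U)`, `x ∈ Y − μ(Y)` imply `Y ⊈ H(U)`; in particular (HU) holds. -/
theorem HU_one_step {Z : Type u} (𝒴 : Set (Set Z)) (μ : Set Z → Set Z)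
    (hunion : ∀ A ∈ 𝒴, ∀ B ∈ 𝒴, A ∪ B ∈ 𝒴)
    (hsub : ∀ X ∈ 𝒴, μ X ⊆ X)
    (hPR : ∀ X ∈ 𝒴, ∀ Y ∈ 𝒴, X ⊆ Y → μ Y ∩ X ⊆ μ X)
    (hCum : ∀ X ∈ 𝒴, ∀ Y ∈ 𝒴, μ X ⊆ Y → Y ⊆ X → μ X = μ Y) :
    (∀ U ∈ 𝒴, HsetU 𝒴 μ U = U ∪ ⋃₀ {X | X ∈ 𝒴 ∧ μ X ⊆ U}) ∧
    (∀ U ∈ 𝒴, ∀ A ∈ 𝒴, U ⊆ A → μ A ⊆ HsetU 𝒴 μ U → μ A ⊆ U) ∧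
    (∀ U ∈ 𝒴, ∀ Y ∈ 𝒴, μ Y ⊆ HsetU 𝒴 μ U → Y ⊆ HsetU 𝒴 μ U ∧ μ (U ∪ Y) = μ U) ∧
    (∀ U ∈ 𝒴, ∀ Y ∈ 𝒴, ∀ x : Z, x ∈ μ U → x ∈ Y → x ∉ μ Y → ¬ Y ⊆ HsetU 𝒴 μ U) ∧
    HUCond 𝒴 μ := by
  classical
  -- key lemma: (2) stated for W := U ∪ ⋃₀ {X | X ∈ 𝒴 ∧ μ X ⊆ U}
  have key2 : ∀ U ∈ 𝒴, ∀ A ∈ 𝒴, U ⊆ A →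
      μ A ⊆ U ∪ ⋃₀ {X | X ∈ 𝒴 ∧ μ X ⊆ U} → μ A ⊆ U := by
    intro U hU A hA hUA hsubW y hy
    rcases hsubW hy with hyU | ⟨X', ⟨hX', hμX'⟩, hyX'⟩
    · exact hyU
    · have hC : A ∪ X' ∈ 𝒴 := hunion A hA X' hX'
      have h2 : μ (A ∪ X') ∩ X' ⊆ μ X' := hPR X' hX' _ hC Set.subset_union_right
      have hsubA : μ (A ∪ X') ⊆ A := by
        intro z hz
        rcases (hsub _ hC) hz with hzA | hzX'
        · exact hzA
        · exact hUA (hμX' (h2 ⟨hz, hzX'⟩))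
      have hEq : μ (A ∪ X') = μ A := hCum _ hC A hA hsubA Set.subset_union_left
      have hy' : y ∈ μ (A ∪ X') := by rw [hEq]; exact hy
      exact hμX' (h2 ⟨hy', hyX'⟩)
  -- part 1
  have part1 : ∀ U ∈ 𝒴, HsetU 𝒴 μ U = U ∪ ⋃₀ {X | X ∈ 𝒴 ∧ μ X ⊆ U} := by
    intro U hU
    apply Set.Subset.antisymm
    · -- H ⊆ W since W belongs to the family
      apply Set.sInter_subset_of_mem
      refine ⟨Set.subset_union_left, ?_⟩
      intro X hX hμXW
      have hA : U ∪ X ∈ 𝒴 := hunion U hU X hX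
      have hμAW : μ (U ∪ X) ⊆ U ∪ ⋃₀ {X | X ∈ 𝒴 ∧ μ X ⊆ U} := by
        intro z hz
        rcases (hsub _ hA) hz with hzU | hzX
        · exact Or.inl hzU
        · exact hμXW (hPR X hX _ hA Set.subset_union_right ⟨hz, hzX⟩)
      have hμAU : μ (U ∪ X) ⊆ U := key2 U hU _ hA Set.subset_union_left hμAW
      intro z hz
      exact Or.inr ⟨U ∪ X, ⟨hA, hμAU⟩, Or.inr hz⟩
    · -- W ⊆ H
      intro z hz S hS
      rcases hS with ⟨hUS, hclS⟩
      rcases hz with hzU | ⟨X, ⟨hX, hμXU⟩, hzX⟩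
      · exact hUS hzU
      · exact hclS X hX (hμXU.trans hUS) hzX
  have part2 : ∀ U ∈ 𝒴, ∀ A ∈ 𝒴, U ⊆ A → μ A ⊆ HsetU 𝒴 μ U → μ A ⊆ U := by
    intro U hU A hA hUA h
    exact key2 U hU A hA hUA (by rwa [part1 U hU] at h)
  have part3 : ∀ U ∈ 𝒴, ∀ Y ∈ 𝒴, μ Y ⊆ HsetU 𝒴 μ U →
      Y ⊆ HsetU 𝒴 μ U ∧ μ (U ∪ Y) = μ U := by
    intro U hU Y hY hμYH
    have hA : U ∪ Y ∈ 𝒴 := hunion U hU Y hY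
    have hμAH : μ (U ∪ Y) ⊆ HsetU 𝒴 μ U := by
      intro z hz
      rcases (hsub _ hA) hz with hzU | hzY
      · rw [part1 U hU]; exact Or.inl hzU
      · exact hμYH (hPR Y hY _ hA Set.subset_union_right ⟨hz, hzY⟩)
    have hμAU : μ (U ∪ Y) ⊆ U := part2 U hU _ hA Set.subset_union_left hμAH
    have hEq : μ (U ∪ Y) = μ U :=
      (hCum _ hA U hU hμAU Set.subset_union_left).symm ▸
        (hCum _ hA U hU hμAU Set.subset_union_left)
    refine ⟨?_, hCum _ hA U hU hμAU Set.subset_union_left⟩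
    rw [part1 U hU]
    intro z hzY
    exact Or.inr ⟨U ∪ Y, ⟨hA, hμAU⟩, Or.inr hzY⟩
  have part4 : ∀ U ∈ 𝒴, ∀ Y ∈ 𝒴, ∀ x : Z, x ∈ μ U → x ∈ Y → x ∉ μ Y →
      ¬ Y ⊆ HsetU 𝒴 μ U := by
    intro U hU Y hY x hxU hxY hxnY hYH
    have hμYH : μ Y ⊆ HsetU 𝒴 μ U := (hsub Y hY).trans hYH
    have h3 := part3 U hU Y hY hμYH
    have hx' : x ∈ μ (U ∪ Y) := by rw [h3.2]; exact hxU
    exact hxnY (hPR Y hY _ (hunion U hU Y hY) Set.subset_union_right ⟨hx', hxY⟩)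
  refine ⟨part1, part2, part3, part4, ?_⟩
  intro U hU Y hY x hxU hxY hxnY hμYH
  exact part4 U hU Y hY x hxU hxY hxnY (part3 U hU Y hY hμYH).1
end

section
/- If 𝒵 = ⟨𝒰, ≺⟩ is a 𝒴-smooth preferential structure over Z and μ(X) := μ_𝒵(X) for X ∈ 𝒴, then (HUx) holds. -/
universe u

/-- `H(U,x)`: the eventual (stabilized) value of the increasing ordinal-indexed
sequence `H(U,x)_0 = U`, `H(U,x)_{α+1} = H(U,x)_α ∪ ⋃{X ∈ 𝒴 : x ∈ X ∧ μ(X) ⊆ H(U,x)_α}`,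
unions at limits; equivalently, the least set `S ⊇ U` such that every `X ∈ 𝒴`
with `x ∈ X` and `μ(X) ⊆ S` is contained in `S`. -/
def Hset {Z : Type u} (𝒴 : Set (Set Z)) (μ : Set Z → Set Z) (U : Set Z) (x : Z) : Set Z :=
  ⋂₀ {S : Set Z | U ⊆ S ∧ ∀ X ∈ 𝒴, x ∈ X → μ X ⊆ S → X ⊆ S}

/-- (HUx): if `x ∈ μ(U)` and `x ∈ Y − μ(Y)`, then `μ(Y) ⊈ H(U,x)`. -/
def HUxCond {Z : Type u} (𝒴 : Set (Set Z)) (μ : Set Z → Set Z) : Prop :=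
  ∀ U ∈ 𝒴, ∀ Y ∈ 𝒴, ∀ x : Z, x ∈ μ U → x ∈ Y → x ∉ μ Y → ¬ μ Y ⊆ Hset 𝒴 μ U x

/-- (HUx) holds in all 𝒴-smooth preferential structures. -/
theorem smooth_HUx {Z : Type u} (𝒴 : Set (Set Z)) (P : PrefStruct Z)
    (μ : Set Z → Set Z) (hμ : ∀ X ∈ 𝒴, μ X = muZ P X)
    (hsm : IsSmoothPref 𝒴 P) :
    HUxCond 𝒴 μ := by
  intro U hU Y hY x hxU hxY hxnY hsub
  rw [hμ U hU] at hxU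
  obtain ⟨hxUm, i, hi, hmin⟩ := hxU
  -- S : elements no copy of which precedes (x,i)
  set S : Set Z := {z | ∀ j : P.I, (z, j) ∈ P.elems → ¬ P.prec (z, j) (x, i)} with hS
  have hHS : Hset 𝒴 μ U x ⊆ S := by
    apply Set.sInter_subset_of_mem
    constructor
    · intro z hz j hj hprec
      exact hmin (z, j) hj hz hprec
    · intro X hX hxX hμX
      rcases hsm X hX (x, i) hi hxX with h | ⟨p, hp, hpprec, hpX, hpmin⟩
      · intro z hz j hj hprec
        exact h (z, j) hj hz hprec
      · exfalso
        have hpμ : p.1 ∈ μ X := by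
          rw [hμ X hX]
          exact ⟨hpX, p.2, by simpa using hp, hpmin⟩
        exact hμX hpμ p.2 (by simpa using hp) hpprec
  rcases hsm Y hY (x, i) hi hxY with h | ⟨p, hp, hpprec, hpY, hpmin⟩
  · exact hxnY (by rw [hμ Y hY]; exact ⟨hxY, i, hi, h⟩)
  · have hpμ : p.1 ∈ μ Y := by
      rw [hμ Y hY]
      exact ⟨hpY, p.2, by simpa using hp, hpmin⟩
    exact hHS (hsub hpμ) p.2 (by simpa using hp) hpprec
end

section
/- Let μ : 𝒴 → 𝒫(Z). There exists a 𝒴-smooth preferential structure 𝒵 over Z such that μ(X) = μ_𝒵(X) for all X ∈ 𝒴 if and only if μ satisfies (μ⊆) and (HUx). -/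
universe u

/- Auxiliary lemmas -/

lemma subset_Hset {Z : Type u} (𝒴 : Set (Set Z)) (μ : Set Z → Set Z) (U : Set Z) (x : Z) :
    U ⊆ Hset 𝒴 μ U x :=
  fun z hz => Set.mem_sInter.2 fun _ hS => hS.1 hz

lemma Hset_closed {Z : Type u} (𝒴 : Set (Set Z)) (μ : Set Z → Set Z) (U : Set Z) (x : Z)
    {X : Set Z} (hX : X ∈ 𝒴) (hx : x ∈ X) (h : μ X ⊆ Hset 𝒴 μ U x) :
    X ⊆ Hset 𝒴 μ U x :=
  fun z hz => Set.mem_sInter.2 fun S hS =>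
    hS.2 X hX hx (h.trans (Set.sInter_subset_of_mem hS)) hz

/-- Elements of the canonical smooth structure. -/
def cE {Z : Type u} (𝒴 : Set (Set Z)) (μ : Set Z → Set Z) : Set (Z × Option (Set Z)) :=
  {p | (∃ U, p.2 = some U ∧ U ∈ 𝒴 ∧ p.1 ∈ μ U) ∨
       (p.2 = none ∧ (∀ U ∈ 𝒴, p.1 ∉ μ U) ∧ ∀ X ∈ 𝒴, p.1 ∈ X → (μ X).Nonempty)}

/-- Relation of the canonical smooth structure. -/
def cR {Z : Type u} (𝒴 : Set (Set Z)) (μ : Set Z → Set Z) :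
    Z × Option (Set Z) → Z × Option (Set Z) → Prop :=
  fun p q => (∃ V, p.2 = some V) ∧
    ((∃ U, q.2 = some U ∧ p.1 ∉ Hset 𝒴 μ U q.1) ∨ q.2 = none)

/-- A copy `(y, some X)` is minimal in `X`. -/
lemma min_copy {Z : Type u} (𝒴 : Set (Set Z)) (μ : Set Z → Set Z) (X : Set Z) (y : Z) :
    ∀ p : Z × Option (Set Z), p.1 ∈ X → ¬ cR 𝒴 μ p (y, some X) := by
  rintro p hpX ⟨⟨V, hV⟩, h⟩
  rcases h with ⟨U, hU, hnH⟩ | hn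
  · obtain rfl : X = U := by simpa using hU
    exact hnH (subset_Hset 𝒴 μ X y hpX)
  · simp at hn

/-- Representation theorem: μ is representable by a 𝒴-smooth preferential
structure iff μ satisfies (μ⊆) and (HUx). -/
theorem smooth_representation {Z : Type u} (𝒴 : Set (Set Z)) (μ : Set Z → Set Z) :
    (∃ P : PrefStruct Z, IsSmoothPref 𝒴 P ∧ ∀ X ∈ 𝒴, μ X = muZ P X) ↔
    ((∀ X ∈ 𝒴, μ X ⊆ X) ∧ HUxCond 𝒴 μ) := by
  constructor
  · rintro ⟨P, hsm, hrep⟩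
    constructor
    · intro X hX y hy
      rw [hrep X hX] at hy
      exact hy.1
    · intro U hU Y hY x hxU hxY hxnY hsub
      rw [hrep U hU] at hxU
      obtain ⟨hxU', i, hiel, hmin⟩ := hxU
      set S : Set Z := {z : Z | ∀ j : P.I, (z, j) ∈ P.elems → ¬ P.prec (z, j) (x, i)} with hSdef
      have hScl : S ∈ {S : Set Z | U ⊆ S ∧ ∀ X ∈ 𝒴, x ∈ X → μ X ⊆ S → X ⊆ S} := by
        constructor
        · intro z hz j hj hprec
          exact hmin (z, j) hj hz hprec
        · intro X hX hxX hmuX z hzX j hzj hprec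
          rcases hsm X hX (x, i) hiel hxX with h1 | ⟨p, hp, hpprec, hpX, hpmin⟩
          · exact h1 (z, j) hzj hzX hprec
          · have hpμ : p.1 ∈ μ X := by
              rw [hrep X hX]
              exact ⟨hpX, p.2, by simpa using hp, fun q hq hqX => hpmin q hq hqX⟩
            have hpS : p.1 ∈ S := hmuX hpμ
            exact hpS p.2 (by simpa using hp) (by simpa using hpprec)
      have hHS : Hset 𝒴 μ U x ⊆ S := Set.sInter_subset_of_mem hScl
      rcases hsm Y hY (x, i) hiel hxY with h1 | ⟨p, hp, hpprec, hpY, hpmin⟩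
      · exact hxnY (by rw [hrep Y hY]; exact ⟨hxY, i, hiel, h1⟩)
      · have hpμ : p.1 ∈ μ Y := by
          rw [hrep Y hY]
          exact ⟨hpY, p.2, by simpa using hp, fun q hq hqY => hpmin q hq hqY⟩
        have hpS : p.1 ∈ S := hHS (hsub hpμ)
        exact hpS p.2 (by simpa using hp) (by simpa using hpprec)
  · rintro ⟨hsub, hHUx⟩
    refine ⟨⟨Option (Set Z), cE 𝒴 μ, cR 𝒴 μ⟩, ?_, ?_⟩
    · -- smoothness
      intro X hX c hc hcX
      rcases hc with ⟨U, hc2, hU𝒴, hcμU⟩ | ⟨hc2, hnot, hne⟩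
      · by_cases h1 : ∀ p ∈ cE 𝒴 μ, p.1 ∈ X → ¬ cR 𝒴 μ p c
        · exact Or.inl h1
        · push_neg at h1
          obtain ⟨p, hp, hpX, hpc⟩ := h1
          have hpH : p.1 ∉ Hset 𝒴 μ U c.1 := by
            rcases hpc.2 with ⟨U', hU', h⟩ | hn
            · rw [hc2] at hU'
              obtain rfl : U = U' := by simpa using hU'
              exact h
            · rw [hc2] at hn; simp at hn
          have hμX : ¬ μ X ⊆ Hset 𝒴 μ U c.1 := fun h =>
            hpH (Hset_closed 𝒴 μ U c.1 hX hcX h hpX)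
          obtain ⟨y, hyμ, hyH⟩ := Set.not_subset.1 hμX
          refine Or.inr ⟨(y, some X), Or.inl ⟨X, rfl, hX, hyμ⟩,
            ⟨⟨X, rfl⟩, Or.inl ⟨U, hc2, hyH⟩⟩, hsub X hX hyμ,
            fun q _ hqX => min_copy 𝒴 μ X y q hqX⟩
      · obtain ⟨y, hyμ⟩ := hne X hX hcX
        refine Or.inr ⟨(y, some X), Or.inl ⟨X, rfl, hX, hyμ⟩,
          ⟨⟨X, rfl⟩, Or.inr hc2⟩, hsub X hX hyμ,
          fun q _ hqX => min_copy 𝒴 μ X y q hqX⟩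
    · -- representation
      intro X hX
      ext x
      constructor
      · intro hx
        exact ⟨hsub X hX hx, some X, Or.inl ⟨X, rfl, hX, hx⟩,
          fun p _ hpX => min_copy 𝒴 μ X x p hpX⟩
      · rintro ⟨hxX, i, hiel, hmin⟩
        rcases hiel with ⟨U, h2, hU𝒴, hxμU⟩ | ⟨h2, hnot, hne⟩
        · by_contra hxn
          have h := hHUx U hU𝒴 X hX x hxμU hxX hxn
          obtain ⟨y, hyμ, hyH⟩ := Set.not_subset.1 h
          exact hmin (y, some X) (Or.inl ⟨X, rfl, hX, hyμ⟩) (hsub X hX hyμ)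
            ⟨⟨X, rfl⟩, Or.inl ⟨U, h2, hyH⟩⟩
        · obtain ⟨y, hyμ⟩ := hne X hX hxX
          exact absurd (hmin (y, some X) (Or.inl ⟨X, rfl, hX, hyμ⟩) (hsub X hX hyμ)
            ⟨⟨X, rfl⟩, Or.inr h2⟩) (fun h => h)
end

section
/- Let ⟨𝒰, ≺⟩ be a preferential structure whose relation ≺ is transitive, and let X, Y be subsets of 𝒰. Then: (1) if A ∈ Λ(Y) and A ⊆ X ⊆ Y, then A ∈ Λ(X); (2) if A ∈ Λ(Y), A ⊆ X ⊆ Y, and B ∈ Λ(X), then A ∩ B ∈ Λ(Y); (3) if A ∈ Λ(Y) and B ∈ Λ(X), then there exists Z' ⊆ A ∪ B with Z' ∈ Λ(Y ∪ X). -/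
universe u

/-- `Y` is a minimizing initial segment (MISE) of `X` (version with copies,
the elements of `U` playing the role of the pairs `⟨x, i⟩`):
`Y ⊆ X`, every element of `X` is equal to or above some element of `Y`,
and `Y` is downward closed in `X`. -/
def MISE {U : Type u} (prec : U → U → Prop) (Y X : Set U) : Prop :=
  Y ⊆ X ∧
  (∀ x ∈ X, ∃ y ∈ Y, y = x ∨ prec y x) ∧
  (∀ y ∈ Y, ∀ x ∈ X, prec x y → x ∈ Y)

/-- Basic facts about MISE in transitive preferential structures:
(1) a MISE of `Y` contained in `X ⊆ Y` is a MISE of `X`;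
(2) if `A ∈ Λ(Y)`, `A ⊆ X ⊆ Y` and `B ∈ Λ(X)`, then `A ∩ B ∈ Λ(Y)`;
(3) if `A ∈ Λ(Y)` and `B ∈ Λ(X)`, then some `Z' ⊆ A ∪ B` is a MISE of `Y ∪ X`. -/
theorem MISE_facts {U : Type u} (prec : U → U → Prop) (htrans : Transitive prec)
    (X Y A B : Set U) :
    (MISE prec A Y → A ⊆ X → X ⊆ Y → MISE prec A X) ∧
    (MISE prec A Y → A ⊆ X → X ⊆ Y → MISE prec B X → MISE prec (A ∩ B) Y) ∧
    (MISE prec A Y → MISE prec B X → ∃ Z' : Set U, Z' ⊆ A ∪ B ∧ MISE prec Z' (Y ∪ X)) := by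
  refine ⟨?_, ?_, ?_⟩
  · rintro ⟨hAY, hmin, hcl⟩ hAX hXY
    exact ⟨hAX, fun x hx => hmin x (hXY hx), fun y hy x hx => hcl y hy x (hXY hx)⟩
  · rintro ⟨hAY, hAmin, hAcl⟩ hAX hXY ⟨hBX, hBmin, hBcl⟩
    refine ⟨fun u hu => hAY hu.1, ?_, ?_⟩
    · intro y hy
      obtain ⟨a, ha, hay⟩ := hAmin y hy
      obtain ⟨b, hb, hba⟩ := hBmin a (hAX ha)
      rcases hba with rfl | hba
      · exact ⟨b, ⟨ha, hb⟩, hay⟩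
      · have hbA : b ∈ A := hAcl a ha b (hXY (hBX hb)) hba
        refine ⟨b, ⟨hbA, hb⟩, Or.inr ?_⟩
        rcases hay with rfl | hay
        · exact hba
        · exact htrans hba hay
    · intro z ⟨hzA, hzB⟩ u hu hprec
      have huA : u ∈ A := hAcl z hzA u hu hprec
      exact ⟨huA, hBcl z hzB u (hAX huA) hprec⟩
  · rintro ⟨hAY, hAmin, hAcl⟩ ⟨hBX, hBmin, hBcl⟩
    refine ⟨{a ∈ A | ∀ x ∈ X, prec x a → x ∈ B} ∪ {b ∈ B | ∀ y ∈ Y, prec y b → y ∈ A},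
      ?_, ?_, ?_, ?_⟩
    · rintro u (⟨h, _⟩ | ⟨h, _⟩)
      · exact Or.inl h
      · exact Or.inr h
    · rintro u (⟨h, _⟩ | ⟨h, _⟩)
      · exact Or.inl (hAY h)
      · exact Or.inr (hBX h)
    · -- minimization
      have keyA : ∀ y, (y ∈ Y ∨ y ∈ X ∧ prec y y) → ∀ a ∈ A, (a = y ∨ prec a y) →
          ∃ z ∈ ({a ∈ A | ∀ x ∈ X, prec x a → x ∈ B} ∪
            {b ∈ B | ∀ y ∈ Y, prec y b → y ∈ A} : Set U), z = y ∨ prec z y := by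
        intro y _ a ha hay
        by_cases hgood : ∀ x ∈ X, prec x a → x ∈ B
        · exact ⟨a, Or.inl ⟨ha, hgood⟩, hay⟩
        · push_neg at hgood
          obtain ⟨x, hx, hxa, hxB⟩ := hgood
          obtain ⟨b, hb, hbx⟩ := hBmin x hx
          have hba : prec b a := by
            rcases hbx with rfl | hbx
            · exact absurd hb hxB
            · exact htrans hbx hxa
          have hbZ : b ∈ ({a ∈ A | ∀ x ∈ X, prec x a → x ∈ B} ∪
              {b ∈ B | ∀ y ∈ Y, prec y b → y ∈ A} : Set U) := by
            refine Or.inr ⟨hb, fun y' hy' hy'b => ?_⟩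
            exact hAcl a ha y' hy' (htrans hy'b hba)
          refine ⟨b, hbZ, Or.inr ?_⟩
          rcases hay with rfl | hay
          · exact hba
          · exact htrans hba hay
      have keyB : ∀ x, True → ∀ b ∈ B, (b = x ∨ prec b x) →
          ∃ z ∈ ({a ∈ A | ∀ x ∈ X, prec x a → x ∈ B} ∪
            {b ∈ B | ∀ y ∈ Y, prec y b → y ∈ A} : Set U), z = x ∨ prec z x := by
        intro x _ b hb hbx
        by_cases hgood : ∀ y ∈ Y, prec y b → y ∈ A
        · exact ⟨b, Or.inr ⟨hb, hgood⟩, hbx⟩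
        · push_neg at hgood
          obtain ⟨y, hy, hyb, hyA⟩ := hgood
          obtain ⟨a, ha, hay⟩ := hAmin y hy
          have hab : prec a b := by
            rcases hay with rfl | hay
            · exact absurd ha hyA
            · exact htrans hay hyb
          have haZ : a ∈ ({a ∈ A | ∀ x ∈ X, prec x a → x ∈ B} ∪
              {b ∈ B | ∀ y ∈ Y, prec y b → y ∈ A} : Set U) := by
            refine Or.inl ⟨ha, fun x' hx' hx'a => ?_⟩
            exact hBcl b hb x' hx' (htrans hx'a hab)
          refine ⟨a, haZ, Or.inr ?_⟩
          rcases hbx with rfl | hbx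
          · exact hab
          · exact htrans hab hbx
      rintro u (hu | hu)
      · obtain ⟨a, ha, hay⟩ := hAmin u hu
        exact keyA u (Or.inl hu) a ha hay
      · obtain ⟨b, hb, hbx⟩ := hBmin u hu
        exact keyB u trivial b hb hbx
    · -- downward closure
      rintro z (⟨hzA, hzgood⟩ | ⟨hzB, hzgood⟩) u hu hprec
      · rcases hu with hu | hu
        · have huA : u ∈ A := hAcl z hzA u hu hprec
          exact Or.inl ⟨huA, fun x hx hxu => hzgood x hx (htrans hxu hprec)⟩
        · have huB : u ∈ B := hzgood u hu hprec
          exact Or.inr ⟨huB, fun y hy hyu => hAcl z hzA y hy (htrans hyu hprec)⟩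
      · rcases hu with hu | hu
        · have huA : u ∈ A := hzgood u hu hprec
          exact Or.inl ⟨huA, fun x hx hxu => hBcl z hzB x hx (htrans hxu hprec)⟩
        · have huB : u ∈ B := hBcl z hzB u hu hprec
          exact Or.inr ⟨huB, fun y hy hyu => hzgood y hy (htrans hyu hprec)⟩
end

section
/- Let μ⁺, μ⁻ : 𝒴 → 𝒫(Z) be such that μ⁺ satisfies (μ⊆) and (μ∅), and (μ⁻1) holds. Then for all X, Y ∈ 𝒴: (1) if μ⁺(X) ∩ Y ≠ ∅ then μ⁺(X) ∩ μ⁻(Y) = ∅; (2) X ∩ μ⁻(X) = ∅. -/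
universe u

/-- If μ⁺ satisfies (μ⊆) and (μ∅), and (μ⁻1) holds, then
(1) `μ⁺(X) ∩ Y ≠ ∅` implies `μ⁺(X) ∩ μ⁻(Y) = ∅`, and
(2) `X ∩ μ⁻(X) = ∅`. -/
theorem muMinus_facts {Z : Type u} (𝒴 : Set (Set Z)) (μp μm : Set Z → Set Z)
    (hsub : ∀ X ∈ 𝒴, μp X ⊆ X)
    (hempty : ∀ X ∈ 𝒴, X.Nonempty → (μp X).Nonempty)
    (hm1 : ∀ X ∈ 𝒴, ∀ Y ∈ 𝒴, (Y ∩ μm X).Nonempty → μp Y ∩ X = ∅) :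
    (∀ X ∈ 𝒴, ∀ Y ∈ 𝒴, (μp X ∩ Y).Nonempty → μp X ∩ μm Y = ∅) ∧
    (∀ X ∈ 𝒴, X ∩ μm X = ∅) := by
  constructor
  · intro X hX Y hY hne
    by_contra h
    replace h := Set.nonempty_iff_ne_empty.mpr h
    obtain ⟨z, hzp, hzm⟩ := h
    have : (X ∩ μm Y).Nonempty := ⟨z, hsub X hX hzp, hzm⟩
    have := hm1 Y hY X hX this
    obtain ⟨w, hw1, hw2⟩ := hne
    exact absurd this (Set.nonempty_iff_ne_empty.mp ⟨w, hw1, hw2⟩)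
  · intro X hX
    by_contra h
    replace h := Set.nonempty_iff_ne_empty.mpr h
    have hXne : X.Nonempty := ⟨h.choose, h.choose_spec.1⟩
    have h1 := hm1 X hX X hX h
    obtain ⟨w, hw⟩ := hempty X hX hXne
    exact absurd h1 (Set.nonempty_iff_ne_empty.mp ⟨w, hw, hsub X hX hw⟩)
end

section
/- Let Z be a set, 𝒴 ⊆ 𝒫(Z) closed under arbitrary intersections and finite unions with ∅, Z ∈ 𝒴, and μ : 𝒴 → 𝒴. (a) If μ satisfies (μ⊆) and (μPR0), then there is a preferential structure 𝒵 over Z with transitive relation such that μ(U) = ⌢(μ_𝒵(U)) for all U ∈ 𝒴. (b) Conversely, if 𝒵 is any preferential structure over Z and μ : 𝒴 → 𝒴 satisfies μ(U) = ⌢(μ_𝒵(U)) for all U ∈ 𝒴, then μ satisfies (μ⊆) and (μPR0). -/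
universe u

/-- The hull `⌢A` of `A` with respect to 𝒴. -/
def hull {Z : Type u} (𝒴 : Set (Set Z)) (A : Set Z) : Set Z :=
  ⋂₀ {X | X ∈ 𝒴 ∧ A ⊆ X}

/-- `μ₀(U) := {x ∈ U : there is no Y ∈ 𝒴 with Y ⊆ U and x ∈ Y − μ(Y)}`. -/
def mu0 {Z : Type u} (𝒴 : Set (Set Z)) (μ : Set Z → Set Z) (U : Set Z) : Set Z :=
  {x ∈ U | ¬ ∃ Y ∈ 𝒴, Y ⊆ U ∧ x ∈ Y ∧ x ∉ μ Y}

/-- (μPR0): `μ(U) − μ₀(U)` is a small subset of `μ(U)` for every `U ∈ 𝒴`,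
i.e. there is no `X ∈ 𝒴` with `μ₀(U) ⊆ X ⊊ μ(U)`. -/
def muPR0 {Z : Type u} (𝒴 : Set (Set Z)) (μ : Set Z → Set Z) : Prop :=
  ∀ U ∈ 𝒴, ¬ ∃ X ∈ 𝒴, mu0 𝒴 μ U ⊆ X ∧ X ⊂ μ U

lemma hull_sandwich {Z : Type u} (𝒴 : Set (Set Z)) (μ : Set Z → Set Z)
    (hmem : ∀ X ∈ 𝒴, μ X ∈ 𝒴)
    (hInter : ∀ S : Set (Set Z), S ⊆ 𝒴 → S.Nonempty → ⋂₀ S ∈ 𝒴)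
    (hpr : muPR0 𝒴 μ) {U S : Set Z} (hU : U ∈ 𝒴)
    (h1 : mu0 𝒴 μ U ⊆ S) (h2 : S ⊆ μ U) : hull 𝒴 S = μ U := by
  apply subset_antisymm
  · exact Set.sInter_subset_of_mem ⟨hmem U hU, h2⟩
  · intro z hz
    rw [hull, Set.mem_sInter]
    rintro X ⟨hX, hSX⟩
    have hX' : X ∩ μ U ∈ 𝒴 := by
      have := hInter {X, μ U} (by rintro T (rfl | rfl); exacts [hX, hmem U hU])
        ⟨X, by simp⟩
      rwa [Set.sInter_pair] at this
    have hsub : X ∩ μ U ⊆ μ U := Set.inter_subset_right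
    have hne : ¬ (X ∩ μ U ⊂ μ U) := fun h =>
      hpr U hU ⟨X ∩ μ U, hX', fun a ha => ⟨hSX (h1 ha), h2 (h1 ha)⟩, h⟩
    have heq : X ∩ μ U = μ U := by
      rcases hsub.eq_or_ssubset with h | h
      · exact h
      · exact absurd h hne
    rw [← heq] at hz
    exact hz.1

/-- Representation without definability preservation, general case:
μ satisfies (μ⊆) and (μPR0) iff `μ(U) = ⌢(μ_𝒵(U))` for some (transitive)
preferential structure 𝒵. -/
theorem general_representation_hull {Z : Type u} (𝒴 : Set (Set Z)) (μ : Set Z → Set Z)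
    (hmem : ∀ X ∈ 𝒴, μ X ∈ 𝒴)
    (hInter : ∀ S : Set (Set Z), S ⊆ 𝒴 → S.Nonempty → ⋂₀ S ∈ 𝒴)
    (hUnion : ∀ A ∈ 𝒴, ∀ B ∈ 𝒴, A ∪ B ∈ 𝒴)
    (hempty : (∅ : Set Z) ∈ 𝒴) (huniv : (Set.univ : Set Z) ∈ 𝒴) :
    (((∀ X ∈ 𝒴, μ X ⊆ X) ∧ muPR0 𝒴 μ) →
      ∃ P : PrefStruct Z, Transitive P.prec ∧ ∀ U ∈ 𝒴, μ U = hull 𝒴 (muZ P U)) ∧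
    (∀ P : PrefStruct Z, (∀ U ∈ 𝒴, μ U = hull 𝒴 (muZ P U)) →
      (∀ X ∈ 𝒴, μ X ⊆ X) ∧ muPR0 𝒴 μ) := by
  constructor
  · rintro ⟨hsub, hpr⟩
    set P : PrefStruct Z :=
      { I := Set Z
        elems := {p | (∀ a ∈ p.2, ∀ Y ∈ 𝒴, a ∈ Y → a ∉ μ Y → (Y ∩ p.2).Nonempty) ∧
            (∀ Y ∈ 𝒴, p.1 ∈ Y → p.1 ∉ μ Y → (Y ∩ p.2).Nonempty)}
        prec := fun q p => q.1 ∈ p.2 ∧ q.2 ⊆ p.2 } with hP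
    refine ⟨P, ?_, ?_⟩
    · intro a b c hab hbc
      exact ⟨hbc.2 hab.1, hab.2.trans hbc.2⟩
    · intro U hU
      have hsub1 : muZ P U ⊆ μ U := by
        rintro x ⟨hxU, A, hA, hmin⟩
        by_contra hxmu
        obtain ⟨a, haU, haA⟩ := hA.2 U hU hxU hxmu
        exact hmin (a, A) ⟨hA.1, fun Y hY h1 h2 => hA.1 a haA Y hY h1 h2⟩ haU
          ⟨haA, subset_rfl⟩
      have hsub0 : mu0 𝒴 μ U ⊆ muZ P U := by
        rintro x ⟨hxU, hxn⟩
        refine ⟨hxU, Uᶜ, ⟨?_, ?_⟩, ?_⟩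
        · intro a haA Y hY haY hamu
          exact ⟨a, haY, haA⟩
        · intro Y hY hxY hxmu
          by_contra hemp
          rw [Set.not_nonempty_iff_eq_empty] at hemp
          have hYU : Y ⊆ U := by
            intro y hy
            by_contra hyU
            exact absurd (Set.eq_empty_iff_forall_notMem.mp hemp y ⟨hy, hyU⟩) (by simp)
          exact hxn ⟨Y, hY, hYU, hxY, hxmu⟩
        · rintro p hp hpU ⟨hp1, _⟩
          exact hp1 hpU
      exact (hull_sandwich 𝒴 μ hmem hInter hpr hU hsub0 hsub1).symm
  · intro P hrep
    have hsub : ∀ X ∈ 𝒴, μ X ⊆ X := by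
      intro X hX
      rw [hrep X hX]
      exact Set.sInter_subset_of_mem ⟨hX, fun x hx => hx.1⟩
    refine ⟨hsub, ?_⟩
    rintro U hU ⟨X, hX, h0X, hXss⟩
    have hmuZ : muZ P U ⊆ mu0 𝒴 μ U := by
      rintro x ⟨hxU, i, hi, hmin⟩
      refine ⟨hxU, ?_⟩
      rintro ⟨Y, hY, hYU, hxY, hxmu⟩
      have : x ∈ muZ P Y := ⟨hxY, i, hi, fun p hp hpY => hmin p hp (hYU hpY)⟩
      exact hxmu (by
        rw [hrep Y hY]
        exact fun T hT => hT.2 this)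
    have : μ U ⊆ X := by
      rw [hrep U hU]
      exact Set.sInter_subset_of_mem ⟨hX, fun a ha => h0X (hmuZ ha)⟩
    exact hXss.2 this
end

section
/- Let Z be a set, 𝒴 ⊆ 𝒫(Z) closed under arbitrary intersections and finite unions with ∅, Z ∈ 𝒴, and μ : 𝒴 → 𝒴. (a) If μ satisfies (μ⊆), (μPR2) and (μCum), then there is a 𝒴-smooth preferential structure 𝒵 over Z with transitive relation such that μ(U) = ⌢(μ_𝒵(U)) for all U ∈ 𝒴. (b) Conversely, if 𝒵 is any 𝒴-smooth preferential structure over Z and μ : 𝒴 → 𝒴 satisfies μ(U) = ⌢(μ_𝒵(U)) for all U ∈ 𝒴, then μ satisfies (μ⊆), (μPR2) and (μCum). -/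
universe u

/-- `μ₂(U) := {x ∈ U : there is no Y ∈ 𝒴 with μ(U ∪ Y) ⊆ U and x ∈ Y − μ(Y)}`. -/
def mu2 {Z : Type u} (𝒴 : Set (Set Z)) (μ : Set Z → Set Z) (U : Set Z) : Set Z :=
  {x ∈ U | ¬ ∃ Y ∈ 𝒴, μ (U ∪ Y) ⊆ U ∧ x ∈ Y ∧ x ∉ μ Y}

/-- (μPR2): `μ(U) − μ₂(U)` is a small subset of `μ(U)` for every `U ∈ 𝒴`,
i.e. there is no `X ∈ 𝒴` with `μ₂(U) ⊆ X ⊊ μ(U)`. -/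
def muPR2 {Z : Type u} (𝒴 : Set (Set Z)) (μ : Set Z → Set Z) : Prop :=
  ∀ U ∈ 𝒴, ¬ ∃ X ∈ 𝒴, mu2 𝒴 μ U ⊆ X ∧ X ⊂ μ U

section Aux

variable {Z : Type u} (𝒴 : Set (Set Z)) (μ : Set Z → Set Z)

/-- The reserve set used in the construction for direction (a). -/
def RRes (U' : Set Z) : Set Z :=
  {a | ∃ V ∈ 𝒴, U' ⊆ V ∧ a ∈ mu2 𝒴 μ V ∧ a ∉ U'}

variable {𝒴 μ}

lemma RRes_mono {U' U'' : Set Z} (h : U' ⊆ U'') : RRes 𝒴 μ U'' ⊆ RRes 𝒴 μ U' := by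
  rintro a ⟨V, hV, hsub, ha, haU⟩
  exact ⟨V, hV, h.trans hsub, ha, fun hc => haU (h hc)⟩

lemma mu2_subset_mu (hsub : ∀ X ∈ 𝒴, μ X ⊆ X) {V : Set Z} (hV : V ∈ 𝒴) :
    mu2 𝒴 μ V ⊆ μ V := by
  rintro z ⟨hzV, hz⟩
  by_contra hzm
  exact hz ⟨V, hV, by simpa using hsub V hV, hzV, hzm⟩

lemma inter_mem' (hInter : ∀ S : Set (Set Z), S ⊆ 𝒴 → S.Nonempty → ⋂₀ S ∈ 𝒴)
    {A B : Set Z} (hA : A ∈ 𝒴) (hB : B ∈ 𝒴) : A ∩ B ∈ 𝒴 := by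
  have := hInter {A, B} (by rintro X (rfl | rfl) <;> assumption) ⟨A, by simp⟩
  simpa using this

/-- Extraction lemma from (μPR2): if `μ V ⊄ W` then `mu2 V ⊄ W`. -/
lemma extract (hsub : ∀ X ∈ 𝒴, μ X ⊆ X) (hPR2 : muPR2 𝒴 μ)
    (hmem : ∀ X ∈ 𝒴, μ X ∈ 𝒴)
    (hInter : ∀ S : Set (Set Z), S ⊆ 𝒴 → S.Nonempty → ⋂₀ S ∈ 𝒴)
    {V W : Set Z} (hV : V ∈ 𝒴) (hW : W ∈ 𝒴) (h : ¬ μ V ⊆ W) :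
    ∃ a ∈ mu2 𝒴 μ V, a ∉ W := by
  by_contra hc
  push_neg at hc
  obtain ⟨b, hbμ, hbW⟩ : ∃ b ∈ μ V, b ∉ W := by
    by_contra h2; push_neg at h2; exact h h2
  refine hPR2 V hV ⟨W ∩ μ V, inter_mem' hInter hW (hmem V hV), ?_, ?_⟩
  · intro z hz
    exact ⟨hc z hz, mu2_subset_mu hsub hV hz⟩
  · exact ⟨Set.inter_subset_right, fun hge => hbW (hge hbμ).1⟩

/-- (C0): `μ Y ⊆ U` implies `μ (U ∪ Y) ⊆ U`. -/
lemma cum0 (hsub : ∀ X ∈ 𝒴, μ X ⊆ X) (hPR2 : muPR2 𝒴 μ)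
    (hmem : ∀ X ∈ 𝒴, μ X ∈ 𝒴)
    (hInter : ∀ S : Set (Set Z), S ⊆ 𝒴 → S.Nonempty → ⋂₀ S ∈ 𝒴)
    (hUnion : ∀ A ∈ 𝒴, ∀ B ∈ 𝒴, A ∪ B ∈ 𝒴)
    {U Y : Set Z} (hU : U ∈ 𝒴) (hY : Y ∈ 𝒴) (h : μ Y ⊆ U) :
    μ (U ∪ Y) ⊆ U := by
  by_contra hcon
  have hC : U ∪ Y ∈ 𝒴 := hUnion U hU Y hY
  obtain ⟨b, hbμ, hbU⟩ : ∃ b ∈ μ (U ∪ Y), b ∉ U := by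
    by_contra h2; push_neg at h2; exact hcon h2
  refine hPR2 (U ∪ Y) hC ⟨U ∩ μ (U ∪ Y), inter_mem' hInter hU (hmem _ hC), ?_, ?_⟩
  · rintro z hz
    refine ⟨?_, mu2_subset_mu hsub hC hz⟩
    by_contra hzU
    have hzY : z ∈ Y := (hz.1.resolve_left hzU)
    by_cases hzm : z ∈ μ Y
    · exact hzU (h hzm)
    · exact hz.2 ⟨Y, hY, by rw [Set.union_assoc, Set.union_self]; exact hsub _ hC,
        hzY, hzm⟩
  · exact ⟨Set.inter_subset_right, fun hge => hbU (hge hbμ).1⟩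

end Aux

/-- Representation without definability preservation, smooth case:
μ satisfies (μ⊆), (μPR2) and (μCum) iff `μ(U) = ⌢(μ_𝒵(U))` for some
(transitive) 𝒴-smooth preferential structure 𝒵. -/
theorem smooth_representation_hull {Z : Type u} (𝒴 : Set (Set Z)) (μ : Set Z → Set Z)
    (hmem : ∀ X ∈ 𝒴, μ X ∈ 𝒴)
    (hInter : ∀ S : Set (Set Z), S ⊆ 𝒴 → S.Nonempty → ⋂₀ S ∈ 𝒴)
    (hUnion : ∀ A ∈ 𝒴, ∀ B ∈ 𝒴, A ∪ B ∈ 𝒴)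
    (hempty : (∅ : Set Z) ∈ 𝒴) (huniv : (Set.univ : Set Z) ∈ 𝒴) :
    (((∀ X ∈ 𝒴, μ X ⊆ X) ∧ muPR2 𝒴 μ ∧
        (∀ X ∈ 𝒴, ∀ Y ∈ 𝒴, μ X ⊆ Y → Y ⊆ X → μ X = μ Y)) →
      ∃ P : PrefStruct Z, Transitive P.prec ∧ IsSmoothPref 𝒴 P ∧
        ∀ U ∈ 𝒴, μ U = hull 𝒴 (muZ P U)) ∧
    (∀ P : PrefStruct Z, IsSmoothPref 𝒴 P → (∀ U ∈ 𝒴, μ U = hull 𝒴 (muZ P U)) →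
      (∀ X ∈ 𝒴, μ X ⊆ X) ∧ muPR2 𝒴 μ ∧
        (∀ X ∈ 𝒴, ∀ Y ∈ 𝒴, μ X ⊆ Y → Y ⊆ X → μ X = μ Y)) := by
  constructor
  · -- Direction (a)
    rintro ⟨hsub, hPR2, hCum⟩
    set P : PrefStruct Z :=
      { I := Set Z
        elems := {p | ∃ U' ∈ 𝒴, p.1 ∈ mu2 𝒴 μ U' ∧ p.2 = RRes 𝒴 μ U'}
        prec := fun p q => p.1 ∈ q.2 ∧ p.2 ⊆ q.2 } with hP
    have htrans : Transitive P.prec := by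
      rintro p q r ⟨h1, h2⟩ ⟨h3, h4⟩
      exact ⟨h4 h1, h2.trans h4⟩
    -- muZ P U sits between mu2 U and μ U
    have hlow : ∀ U ∈ 𝒴, mu2 𝒴 μ U ⊆ muZ P U := by
      intro U hU x hx
      refine ⟨hx.1, RRes 𝒴 μ U, ⟨U, hU, hx, rfl⟩, ?_⟩
      rintro p hp hpU ⟨hp1, -⟩
      obtain ⟨V, hV, hUV, hpm, hpnU⟩ := hp1
      exact hpnU hpU
    have hhigh : ∀ U ∈ 𝒴, muZ P U ⊆ μ U := by
      rintro U hU x ⟨hxU, A, ⟨U', hU', hxm, hA⟩, hmin⟩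
      by_contra hxμ
      have hne : ¬ μ (U' ∪ U) ⊆ U' := fun hh => hxm.2 ⟨U, hU, hh, hxU, hxμ⟩
      obtain ⟨a, ham, haU'⟩ :=
        extract hsub hPR2 hmem hInter (hUnion U' hU' U hU) hU' hne
      have haU : a ∈ U := (hsub _ (hUnion U' hU' U hU) (mu2_subset_mu hsub
        (hUnion U' hU' U hU) ham)).resolve_left haU'
      refine hmin (a, RRes 𝒴 μ (U' ∪ U)) ⟨U' ∪ U, hUnion U' hU' U hU, ham, rfl⟩ haU ?_
      constructor
      · rw [hA]; exact ⟨U' ∪ U, hUnion U' hU' U hU, Set.subset_union_left, ham, haU'⟩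
      · rw [hA]; exact RRes_mono Set.subset_union_left
    have hsmooth : IsSmoothPref 𝒴 P := by
      rintro X hX c ⟨U', hU', hcm, hc2⟩ hcX
      by_cases hμ : μ (U' ∪ X) ⊆ U'
      · left
        rintro p hp hpX ⟨hp1, -⟩
        rw [hc2] at hp1
        obtain ⟨V, hV, hUV, hpm, hpU⟩ := hp1
        by_cases hpμ : p.1 ∈ μ (U' ∪ X)
        · exact hpU (hμ hpμ)
        · refine hpm.2 ⟨U' ∪ X, hUnion U' hU' X hX, ?_, Or.inr hpX, hpμ⟩
          exact cum0 hsub hPR2 hmem hInter hUnion hV (hUnion U' hU' X hX)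
            (hμ.trans hUV)
      · right
        obtain ⟨a, ham, haU'⟩ :=
          extract hsub hPR2 hmem hInter (hUnion U' hU' X hX) hU' hμ
        have haX : a ∈ X := (hsub _ (hUnion U' hU' X hX) (mu2_subset_mu hsub
          (hUnion U' hU' X hX) ham)).resolve_left haU'
        refine ⟨(a, RRes 𝒴 μ (U' ∪ X)), ⟨U' ∪ X, hUnion U' hU' X hX, ham, rfl⟩,
          ⟨?_, ?_⟩, haX, ?_⟩
        · rw [hc2]
          exact ⟨U' ∪ X, hUnion U' hU' X hX, Set.subset_union_left, ham, haU'⟩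
        · rw [hc2]; exact RRes_mono Set.subset_union_left
        · rintro q hq hqX ⟨hq1, -⟩
          obtain ⟨V, hV, hUV, hqm, hqnU⟩ := hq1
          exact hqnU (Or.inr hqX)
    refine ⟨P, htrans, hsmooth, ?_⟩
    intro U hU
    apply Set.Subset.antisymm
    · intro a ha
      rintro K ⟨hK, hKsup⟩
      have h1 : mu2 𝒴 μ U ⊆ K ∩ μ U := fun z hz =>
        ⟨hKsup (hlow U hU hz), mu2_subset_mu hsub hU hz⟩
      have h2 : ¬ (K ∩ μ U ⊂ μ U) := fun hss =>
        hPR2 U hU ⟨K ∩ μ U, inter_mem' hInter hK (hmem U hU), h1, hss⟩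
      have h3 : μ U ⊆ K ∩ μ U := by
        by_contra h4
        exact h2 ⟨Set.inter_subset_right, h4⟩
      exact (h3 ha).1
    · exact Set.sInter_subset_of_mem ⟨hmem U hU, hhigh U hU⟩
  · -- Direction (b)
    intro P hsmooth hrep
    have hmem_hull : ∀ A : Set Z, A ⊆ hull 𝒴 A := by
      rintro A x hx K ⟨hK, hs⟩; exact hs hx
    have hsubc : ∀ X ∈ 𝒴, μ X ⊆ X := by
      intro X hX
      rw [hrep X hX]
      exact Set.sInter_subset_of_mem ⟨hX, fun x hx => hx.1⟩
    refine ⟨hsubc, ?_, ?_⟩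
    · -- (μPR2)
      rintro U hU ⟨X, hX, hsub2, hss⟩
      have hkey : muZ P U ⊆ mu2 𝒴 μ U := by
        rintro x ⟨hxU, i, hi, hmin⟩
        refine ⟨hxU, ?_⟩
        rintro ⟨Y, hY, hμ, hxY, hxm⟩
        have hW : U ∪ Y ∈ 𝒴 := hUnion U hU Y hY
        rcases hsmooth (U ∪ Y) hW (x, i) hi (Or.inl hxU) with hminW | ⟨p, hp, hprec, hpW, hpmin⟩
        · -- x minimal in U ∪ Y, hence in Y, so x ∈ μ Y
          have hxmuZ : x ∈ muZ P Y :=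
            ⟨hxY, i, hi, fun p hp hpY => hminW p hp (Or.inr hpY)⟩
          have : x ∈ μ Y := by
            rw [hrep Y hY]; exact hmem_hull _ hxmuZ
          exact hxm this
        · have hpmuZ : p.1 ∈ muZ P (U ∪ Y) := by
            refine ⟨hpW, p.2, ?_, ?_⟩
            · simpa using hp
            · intro q hq hqW hqp
              exact hpmin q hq hqW (by simpa using hqp)
          have hpU : p.1 ∈ U := by
            have : p.1 ∈ μ (U ∪ Y) := by
              rw [hrep (U ∪ Y) hW]; exact hmem_hull _ hpmuZ
            exact hμ this
          exact hmin p hp hpU hprec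
      have : μ U ⊆ X := by
        rw [hrep U hU]
        exact Set.sInter_subset_of_mem ⟨hX, hkey.trans hsub2⟩
      exact hss.not_subset this
    · -- (μCum)
      intro X hX Y hY hμY hYX
      have hXY : muZ P X = muZ P Y := by
        apply Set.Subset.antisymm
        · rintro x ⟨hxX, i, hi, hmin⟩
          have hxY : x ∈ Y := by
            have : x ∈ μ X := by rw [hrep X hX]; exact hmem_hull _ ⟨hxX, i, hi, hmin⟩
            exact hμY this
          exact ⟨hxY, i, hi, fun p hp hpY => hmin p hp (hYX hpY)⟩
        · rintro x ⟨hxY, i, hi, hmin⟩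
          have hxX : x ∈ X := hYX hxY
          rcases hsmooth X hX (x, i) hi hxX with hminX | ⟨p, hp, hprec, hpX, hpmin⟩
          · exact ⟨hxX, i, hi, hminX⟩
          · have hpmuZ : p.1 ∈ muZ P X := by
              refine ⟨hpX, p.2, by simpa using hp, ?_⟩
              intro q hq hqX hqp
              exact hpmin q hq hqX (by simpa using hqp)
            have hpY : p.1 ∈ Y := by
              have : p.1 ∈ μ X := by rw [hrep X hX]; exact hmem_hull _ hpmuZ
              exact hμY this
            exact absurd hprec (hmin p hp hpY)
      rw [hrep X hX, hrep Y hY, hXY]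
end

section
/- Let 𝒴 contain all singletons {x} for x ∈ Z, be closed under finite unions and arbitrary intersections, and let μ : 𝒴 → 𝒴 satisfy (μ=) for finite sets, (μ∈), (μPR3) and (μ∅fin). Then: (1) μ₃(X) ⊆ μ(X) for all X ∈ 𝒴; (2) μ(X) = μ₃(X) for all finite X ∈ 𝒴; (3) μ₃ satisfies (μ⊆): μ₃(X) ⊆ X; (4) μ₃ satisfies (μPR): X ⊆ Y implies μ₃(Y) ∩ X ⊆ μ₃(X); (5) μ₃ satisfies (μ∅fin); (6) μ₃ satisfies (μ=) (for all X, Y ∈ 𝒴); (7) μ₃ satisfies (μ∈); (8) μ(X) = ⌢(μ₃(X)) for all X ∈ 𝒴. -/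
/-
Everything except (μ=) for μ₃ is bookkeeping around a single consequence of (μPR3): a set of 𝒴
squeezed between μ₃(U) and μ(U) must be μ(U) itself. Squeezing ∅ gives (μ∅fin) for μ₃ (when
∅ ∉ 𝒴, two distinct singletons would intersect to ∅, so Z has at most one point), squeezing the
finite set μ₃(X) gives μ = μ₃ on finite sets, and squeezing ⌢μ₃(U) gives μ(U) = ⌢μ₃(U).
(μ=) for μ₃ reduces to transitivity of the relation `a ∈ μ {a, b}`, which is read off the triple
T = {a, c, y}: μ(T) is a nonempty subset of T, and (μ=) for the pairs inside T forces a ∈ μ(T).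
-/

universe u

/-- `μ₃(U) := {x ∈ U : for all y ∈ U, x ∈ μ({x, y})}`. -/
def mu3 {Z : Type u} (μ : Set Z → Set Z) (U : Set Z) : Set Z :=
  {x ∈ U | ∀ y ∈ U, x ∈ μ {x, y}}

open Set

variable {Z : Type u} {𝒴 : Set (Set Z)} {μ : Set Z → Set Z}

variable (μ) in
theorem mu3_subset (U : Set Z) : mu3 μ U ⊆ U := fun _ hx => hx.1

variable (μ) in
theorem mu3_empty : mu3 μ ∅ = ∅ := subset_empty_iff.1 (mu3_subset μ ∅)

theorem mu3_inter_subset_mu3 {X Y : Set Z} (hXY : X ⊆ Y) : mu3 μ Y ∩ X ⊆ mu3 μ X :=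
  fun _ hx => ⟨hx.2, fun y hy => hx.1.2 y (hXY hy)⟩

theorem mu3_subset_mu {X : Set Z} (hin : ∀ a ∈ X, a ∉ μ X → ∃ b ∈ X, a ∉ μ {a, b}) :
    mu3 μ X ⊆ μ X := by
  intro a ha
  by_contra haX
  obtain ⟨b, hb, hab⟩ := hin a ha.1 haX
  exact hab (ha.2 b hb)

theorem exists_notMem_mu3_pair {X : Set Z} {a : Z} (ha : a ∈ X) (haX : a ∉ mu3 μ X) :
    ∃ b ∈ X, a ∉ mu3 μ {a, b} := by
  obtain ⟨b, hb, hab⟩ : ∃ b ∈ X, a ∉ μ {a, b} := by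
    by_contra! h
    exact haX ⟨ha, h⟩
  exact ⟨b, hb, fun h => hab (h.2 b (mem_insert_of_mem a rfl))⟩

theorem mu3_inter_eq_of_trans
    (htrans : ∀ a c y : Z, a ∈ μ {a, c} → c ∈ μ {c, y} → a ∈ μ {a, y})
    {X Y : Set Z} (hXY : X ⊆ Y) (hne : (mu3 μ Y ∩ X).Nonempty) :
    mu3 μ Y ∩ X = mu3 μ X := by
  obtain ⟨c, hcY, hcX⟩ := hne
  refine (mu3_inter_subset_mu3 hXY).antisymm fun a ha => ⟨⟨hXY ha.1, fun y hy => ?_⟩, ha.1⟩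
  exact htrans a c y (ha.2 c hcX) (hcY.2 y hy)

theorem eq_mu_of_mu3_subset_of_subset {U W : Set Z}
    (hPR3 : ¬ ∃ X ∈ 𝒴, mu3 μ U ⊆ X ∧ X ⊂ μ U)
    (hW : W ∈ 𝒴) (hU : mu3 μ U ⊆ W) (hWU : W ⊆ μ U) : W = μ U := by
  by_contra hne
  exact hPR3 ⟨W, hW, hU, hWU.ssubset_of_ne hne⟩

theorem subset_hull (A : Set Z) : A ⊆ hull 𝒴 A := subset_sInter fun _ hW => hW.2

theorem hull_subset {A W : Set Z} (hW : W ∈ 𝒴) (hAW : A ⊆ W) : hull 𝒴 A ⊆ W :=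
  sInter_subset_of_mem ⟨hW, hAW⟩

theorem hull_mem (hInter : ∀ S : Set (Set Z), S ⊆ 𝒴 → S.Nonempty → ⋂₀ S ∈ 𝒴)
    {A W : Set Z} (hW : W ∈ 𝒴) (hAW : A ⊆ W) : hull 𝒴 A ∈ 𝒴 :=
  hInter _ (fun _ hV => hV.1) ⟨W, hW, hAW⟩

theorem mu_eq_hull_mu3 (hInter : ∀ S : Set (Set Z), S ⊆ 𝒴 → S.Nonempty → ⋂₀ S ∈ 𝒴)
    {U : Set Z} (hPR3 : ¬ ∃ X ∈ 𝒴, mu3 μ U ⊆ X ∧ X ⊂ μ U) (hμU : μ U ∈ 𝒴)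
    (hsub : mu3 μ U ⊆ μ U) : μ U = hull 𝒴 (mu3 μ U) :=
  (eq_mu_of_mu3_subset_of_subset hPR3 (hull_mem hInter hμU hsub) (subset_hull _)
    (hull_subset hμU hsub)).symm

theorem mem_of_finite_of_nonempty (hsing : ∀ x : Z, {x} ∈ 𝒴)
    (hUnion : ∀ A ∈ 𝒴, ∀ B ∈ 𝒴, A ∪ B ∈ 𝒴) {S : Set Z} (hS : S.Finite) (hne : S.Nonempty) :
    S ∈ 𝒴 := by
  induction S, hS using Set.Finite.induction_on with
  | empty => exact absurd hne not_nonempty_empty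
  | @insert a s _ _ ih =>
    rcases s.eq_empty_or_nonempty with rfl | hs
    · simpa only [insert_empty_eq] using hsing a
    · simpa only [insert_eq] using hUnion _ (hsing a) _ (ih hs)

theorem empty_mem_or_subsingleton (hsing : ∀ x : Z, {x} ∈ 𝒴)
    (hinter : ∀ A ∈ 𝒴, ∀ B ∈ 𝒴, A ∩ B ∈ 𝒴) : ∅ ∈ 𝒴 ∨ Subsingleton Z := by
  rw [or_iff_not_imp_right, not_subsingleton_iff_nontrivial]
  intro
  obtain ⟨x, y, hxy⟩ := exists_pair_ne Z
  have hempty : ({x} ∩ {y} : Set Z) = ∅ := singleton_inter_eq_empty.2 hxy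
  exact hempty ▸ hinter _ (hsing x) _ (hsing y)

theorem mu3_nonempty_of_finite (hsing : ∀ x : Z, {x} ∈ 𝒴)
    (hinter : ∀ A ∈ 𝒴, ∀ B ∈ 𝒴, A ∩ B ∈ 𝒴)
    (hnefin : ∀ X ∈ 𝒴, X.Finite → X.Nonempty → (μ X).Nonempty)
    {X : Set Z} (hX : X ∈ 𝒴) (hPR3 : ¬ ∃ W ∈ 𝒴, mu3 μ X ⊆ W ∧ W ⊂ μ X)
    (hfin : X.Finite) (hne : X.Nonempty) : (mu3 μ X).Nonempty := by
  obtain h0 | _ := empty_mem_or_subsingleton hsing hinter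
  · by_contra hX3
    rw [not_nonempty_iff_eq_empty] at hX3
    have hμX : ∅ = μ X := eq_mu_of_mu3_subset_of_subset hPR3 h0 hX3.subset (empty_subset _)
    exact (hnefin X hX hfin hne).ne_empty hμX.symm
  · obtain ⟨z, hz⟩ := hne
    refine ⟨z, hz, fun y _ => ?_⟩
    obtain ⟨w, hw⟩ := hnefin {z} (hsing z) (finite_singleton z) (singleton_nonempty z)
    rw [Subsingleton.elim y z, pair_eq_singleton]
    rwa [Subsingleton.elim w z] at hw

theorem mu_eq_mu3_of_finite (hsing : ∀ x : Z, {x} ∈ 𝒴)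
    (hUnion : ∀ A ∈ 𝒴, ∀ B ∈ 𝒴, A ∪ B ∈ 𝒴) (hinter : ∀ A ∈ 𝒴, ∀ B ∈ 𝒴, A ∩ B ∈ 𝒴)
    (hnefin : ∀ X ∈ 𝒴, X.Finite → X.Nonempty → (μ X).Nonempty)
    {X : Set Z} (hX : X ∈ 𝒴) (hin : ∀ a ∈ X, a ∉ μ X → ∃ b ∈ X, a ∉ μ {a, b})
    (hPR3 : ¬ ∃ W ∈ 𝒴, mu3 μ X ⊆ W ∧ W ⊂ μ X) (hfin : X.Finite) : μ X = mu3 μ X := by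
  rcases X.eq_empty_or_nonempty with rfl | hne
  · rw [mu3_empty]
    exact (eq_mu_of_mu3_subset_of_subset hPR3 hX (mu3_empty μ).subset (empty_subset _)).symm
  · have hX3 := mem_of_finite_of_nonempty hsing hUnion (hfin.subset (mu3_subset μ X))
      (mu3_nonempty_of_finite hsing hinter hnefin hX hPR3 hfin hne)
    exact (eq_mu_of_mu3_subset_of_subset hPR3 hX3 subset_rfl (mu3_subset_mu hin)).symm

theorem mem_mu_pair_trans (hsing : ∀ x : Z, {x} ∈ 𝒴)
    (hUnion : ∀ A ∈ 𝒴, ∀ B ∈ 𝒴, A ∪ B ∈ 𝒴)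
    (heqfin : ∀ X ∈ 𝒴, ∀ Y ∈ 𝒴, X.Finite → Y.Finite → X ⊆ Y →
      (μ Y ∩ X).Nonempty → μ Y ∩ X = μ X)
    (hnefin : ∀ X ∈ 𝒴, X.Finite → X.Nonempty → (μ X).Nonempty)
    {a c y : Z} (hsub : μ {a, c, y} ⊆ {a, c, y})
    (hac : a ∈ μ {a, c}) (hcy : c ∈ μ {c, y}) : a ∈ μ {a, y} := by
  set T : Set Z := {a, c, y}
  have haT : a ∈ T := mem_insert a _
  have hcT : c ∈ T := mem_insert_of_mem a (mem_insert c _)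
  have hyT : y ∈ T := mem_insert_of_mem a (mem_insert_of_mem c rfl)
  have hT : T ∈ 𝒴 := mem_of_finite_of_nonempty hsing hUnion (toFinite T) ⟨a, haT⟩
  have restrict : ∀ u ∈ T, ∀ v ∈ T, ∀ x ∈ ({u, v} : Set Z), x ∈ μ T →
      μ T ∩ {u, v} = μ {u, v} := fun u hu v hv x hx hxT =>
    heqfin _ (mem_of_finite_of_nonempty hsing hUnion (toFinite _) (insert_nonempty _ _)) T hT
      (toFinite _) (toFinite T) (insert_subset hu (singleton_subset_iff.2 hv)) ⟨x, hxT, hx⟩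
  have haμ : a ∈ μ T := by
    by_contra haμ
    have hcμ : c ∉ μ T := fun hcμ => by
      rw [← restrict a haT c hcT c (mem_insert_of_mem a rfl) hcμ] at hac
      exact haμ hac.1
    obtain ⟨w, hw⟩ := hnefin T hT (toFinite T) ⟨a, haT⟩
    obtain rfl | rfl | rfl := hsub hw
    · exact haμ hw
    · exact hcμ hw
    · rw [← restrict c hcT w hyT w (mem_insert_of_mem c rfl) hw] at hcy
      exact hcμ hcy.1
  rw [← restrict a haT y hyT a (mem_insert a _) haμ]
  exact ⟨haμ, mem_insert a _⟩

/-- Properties of μ₃ derived from (μ=) for finite sets, (μ∈), (μPR3), (μ∅fin). -/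
theorem mu3_properties {Z : Type u} (𝒴 : Set (Set Z)) (μ : Set Z → Set Z)
    (hmem : ∀ X ∈ 𝒴, μ X ∈ 𝒴)
    (hsing : ∀ x : Z, {x} ∈ 𝒴)
    (hUnion : ∀ A ∈ 𝒴, ∀ B ∈ 𝒴, A ∪ B ∈ 𝒴)
    (hInter : ∀ S : Set (Set Z), S ⊆ 𝒴 → S.Nonempty → ⋂₀ S ∈ 𝒴)
    -- (μ=) for finite sets:
    (heqfin : ∀ X ∈ 𝒴, ∀ Y ∈ 𝒴, X.Finite → Y.Finite → X ⊆ Y →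
      (μ Y ∩ X).Nonempty → μ Y ∩ X = μ X)
    -- (μ∈):
    (hin : ∀ X ∈ 𝒴, ∀ a ∈ X, a ∉ μ X → ∃ b ∈ X, a ∉ μ {a, b})
    -- (μPR3):
    (hPR3 : ∀ U ∈ 𝒴, ¬ ∃ X ∈ 𝒴, mu3 μ U ⊆ X ∧ X ⊂ μ U)
    -- (μ∅fin):
    (hnefin : ∀ X ∈ 𝒴, X.Finite → X.Nonempty → (μ X).Nonempty) :
    -- (1)
    (∀ X ∈ 𝒴, mu3 μ X ⊆ μ X) ∧
    -- (2)
    (∀ X ∈ 𝒴, X.Finite → μ X = mu3 μ X) ∧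
    -- (3) (μ⊆) for μ₃
    (∀ X ∈ 𝒴, mu3 μ X ⊆ X) ∧
    -- (4) (μPR) for μ₃
    (∀ X ∈ 𝒴, ∀ Y ∈ 𝒴, X ⊆ Y → mu3 μ Y ∩ X ⊆ mu3 μ X) ∧
    -- (5) (μ∅fin) for μ₃
    (∀ X ∈ 𝒴, X.Finite → X.Nonempty → (mu3 μ X).Nonempty) ∧
    -- (6) (μ=) for μ₃, for all X, Y ∈ 𝒴
    (∀ X ∈ 𝒴, ∀ Y ∈ 𝒴, X ⊆ Y → (mu3 μ Y ∩ X).Nonempty → mu3 μ Y ∩ X = mu3 μ X) ∧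
    -- (7) (μ∈) for μ₃
    (∀ X ∈ 𝒴, ∀ a ∈ X, a ∉ mu3 μ X → ∃ b ∈ X, a ∉ mu3 μ {a, b}) ∧
    -- (8)
    (∀ X ∈ 𝒴, μ X = hull 𝒴 (mu3 μ X)) := by
  have hinter : ∀ A ∈ 𝒴, ∀ B ∈ 𝒴, A ∩ B ∈ 𝒴 := fun A hA B hB => by
    simpa only [sInter_pair] using
      hInter {A, B} (insert_subset hA (singleton_subset_iff.2 hB)) (insert_nonempty _ _)
  have hfin : ∀ X ∈ 𝒴, X.Finite → μ X = mu3 μ X := fun X hX =>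
    mu_eq_mu3_of_finite hsing hUnion hinter hnefin hX (hin X hX) (hPR3 X hX)
  have htrans : ∀ a c y : Z, a ∈ μ {a, c} → c ∈ μ {c, y} → a ∈ μ {a, y} := fun a c y => by
    refine mem_mu_pair_trans hsing hUnion heqfin hnefin ?_
    rw [hfin _ (mem_of_finite_of_nonempty hsing hUnion (toFinite _) (insert_nonempty _ _))
      (toFinite _)]
    exact mu3_subset μ _
  exact ⟨fun X hX => mu3_subset_mu (hin X hX), hfin, fun X _ => mu3_subset μ X,
    fun _ _ _ _ => mu3_inter_subset_mu3,
    fun X hX => mu3_nonempty_of_finite hsing hinter hnefin hX (hPR3 X hX),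
    fun _ _ _ _ => mu3_inter_eq_of_trans htrans, fun _ _ _ => exists_notMem_mu3_pair,
    fun X hX => mu_eq_hull_mu3 hInter (hPR3 X hX) (hmem X hX) (mu3_subset_mu (hin X hX))⟩
end
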